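/- Let p ∈ [1,2], b > 0, σ > 0, R > 0, L ≥ 0, a = 2^{(2p-1)/2}, α_i = (1/a)((i+p)/p)^{p-1}, B_i = aα_i², β_i = L + (bσ/R)(i+p+1)^{(2p-1)/2}, A_k = Σ_{i=0}^k α_i. Then (σ²/A_k)·Σ_{i=0}^k B_i/(β_i - L) ≤ (σR p^{2-p}/(b(p - 1/2)))·(k+p+2)^{p-1/2}/(k+p)^p for all k ≥ 0. -/

import Mathlib

/-!
Since `t ↦ t ^ p` is convex for `p ≥ 1` and concave for `p ≤ 1`, its increments over unit
intervals are squeezed between values of the derivative `p t ^ (p - 1)` (Bernoulli's inequality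
in tangent-line form). Telescoping gives `A_k ≥ ((k + p) / p) ^ p / a` and
`∑_{i ≤ k} (i + p + 1) ^ (q - 1) ≤ (k + p + 2) ^ q / q` for `q = p - 1/2 > 0`. Each summand
`B_i / (β_i - L)` is at most `R / (a b σ p ^ (2p - 2)) · (i + p + 1) ^ (q - 1)`, and multiplying
the two bounds gives the claim.
-/

open Finset

namespace Real

theorem rpow_add_mul_rpow_sub_one_mul_sub_le {x y p : ℝ} (hx : 0 < x) (hy : 0 ≤ y)
    (hp : 1 ≤ p) : x ^ p + p * x ^ (p - 1) * (y - x) ≤ y ^ p := by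
  have hs : -1 ≤ y / x - 1 := by linarith [div_nonneg hy hx.le]
  have hy' : y ^ p = x ^ p * (1 + (y / x - 1)) ^ p := by
    rw [add_sub_cancel, div_rpow hy hx.le, mul_div_cancel₀ _ (rpow_pos_of_pos hx p).ne']
  have htangent : x ^ p * (1 + p * (y / x - 1)) = x ^ p + p * x ^ (p - 1) * (y - x) := by
    rw [rpow_sub_one hx.ne']; field_simp
  rw [hy', ← htangent]
  exact mul_le_mul_of_nonneg_left (one_add_mul_self_le_rpow_one_add hs hp) (by positivity)

theorem rpow_le_rpow_add_mul_rpow_sub_one_mul_sub {x y p : ℝ} (hx : 0 < x) (hy : 0 ≤ y)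
    (hp0 : 0 ≤ p) (hp1 : p ≤ 1) : y ^ p ≤ x ^ p + p * x ^ (p - 1) * (y - x) := by
  have hs : -1 ≤ y / x - 1 := by linarith [div_nonneg hy hx.le]
  have hy' : y ^ p = x ^ p * (1 + (y / x - 1)) ^ p := by
    rw [add_sub_cancel, div_rpow hy hx.le, mul_div_cancel₀ _ (rpow_pos_of_pos hx p).ne']
  have htangent : x ^ p * (1 + p * (y / x - 1)) = x ^ p + p * x ^ (p - 1) * (y - x) := by
    rw [rpow_sub_one hx.ne']; field_simp
  rw [hy', ← htangent]
  exact mul_le_mul_of_nonneg_left (rpow_one_add_le_one_add_mul_self hs hp0 hp1) (by positivity)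

theorem div_rpow_sq_div_rpow_le {y p r : ℝ} (hy : 0 ≤ y) (hp : 0 < p) (hr : 0 ≤ r) (s : ℝ) :
    ((y / p) ^ r) ^ 2 / (y + 1) ^ s ≤ (y + 1) ^ (2 * r - s) / p ^ (2 * r) := by
  have hsq : ((y / p) ^ r) ^ 2 = y ^ (2 * r) / p ^ (2 * r) := by
    rw [← rpow_mul_natCast (div_nonneg hy hp.le), div_rpow hy hp.le, Nat.cast_ofNat, mul_comm r]
  rw [hsq, div_right_comm, rpow_sub (by linarith)]
  gcongr
  linarith

end Real

open Real

theorem Finset.sum_range_le_sub_of_le {M : Type*} [AddCommGroup M] [PartialOrder M]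
    [IsOrderedAddMonoid M] {f g : ℕ → M} (h : ∀ i, f i ≤ g (i + 1) - g i) (n : ℕ) :
    ∑ i ∈ range n, f i ≤ g n - g 0 :=
  (sum_le_sum fun i _ => h i).trans_eq (sum_range_sub g n)

theorem Finset.sub_le_sum_range_of_le {M : Type*} [AddCommGroup M] [PartialOrder M]
    [IsOrderedAddMonoid M] {f g : ℕ → M} (h : ∀ i, g (i + 1) - g i ≤ f i) (n : ℕ) :
    g n - g 0 ≤ ∑ i ∈ range n, f i :=
  (sum_range_sub g n).symm.trans_le (sum_le_sum fun i _ => h i)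

theorem div_rpow_le_sum_range_div_rpow_sub_one {p : ℝ} (hp : 1 ≤ p) (k : ℕ) :
    (((k : ℝ) + p) / p) ^ p ≤ ∑ i ∈ range (k + 1), (((i : ℝ) + p) / p) ^ (p - 1) := by
  have hp0 : 0 < p := by linarith
  have htel := sub_le_sum_range_of_le (f := fun i => ((((i + 1 : ℕ) : ℝ) + p) / p) ^ (p - 1))
    (g := fun i => (((i : ℝ) + p) / p) ^ p) (fun i => by
      have := rpow_add_mul_rpow_sub_one_mul_sub_le (x := (((i + 1 : ℕ) : ℝ) + p) / p)
        (y := ((i : ℝ) + p) / p) (by positivity) (by positivity) hp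
      have hstep : (((i : ℝ) + p) / p - (((i + 1 : ℕ) : ℝ) + p) / p) = -1 / p := by
        push_cast; field_simp; ring
      rw [hstep, mul_assoc, mul_comm, mul_assoc, div_mul_cancel₀ _ hp0.ne'] at this
      linarith) k
  rw [sum_range_succ']
  simp only [Nat.cast_zero, zero_add, div_self hp0.ne', one_rpow] at htel ⊢
  linarith

theorem sum_range_rpow_sub_one_le {q c : ℝ} (hq : 0 < q) (hc : 0 ≤ c) (n : ℕ) :
    ∑ i ∈ range n, ((i : ℝ) + c + 1) ^ (q - 1) ≤ ((n : ℝ) + c + 1) ^ q / q := by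
  rw [le_div_iff₀ hq, sum_mul]
  simp_rw [mul_comm _ q]
  rcases le_total q 1 with hq1 | hq1
  · have htel := sum_range_le_sub_of_le (f := fun i => q * ((i : ℝ) + c + 1) ^ (q - 1))
      (g := fun i => ((i : ℝ) + c) ^ q) (fun i => by
        have := rpow_le_rpow_add_mul_rpow_sub_one_mul_sub (x := (i : ℝ) + c + 1)
          (y := (i : ℝ) + c) (by positivity) (by positivity) hq.le hq1
        rw [show ((i + 1 : ℕ) : ℝ) + c = (i : ℝ) + c + 1 by push_cast; ring]
        linarith) n
    have hmono : ((n : ℝ) + c) ^ q ≤ ((n : ℝ) + c + 1) ^ q :=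
      rpow_le_rpow (by positivity) (by linarith) hq.le
    have : (0 : ℝ) ≤ ((0 : ℕ) + c) ^ q := by positivity
    linarith
  · have htel := sum_range_le_sub_of_le (f := fun i => q * ((i : ℝ) + c + 1) ^ (q - 1))
      (g := fun i => ((i : ℝ) + c + 1) ^ q) (fun i => by
        have := rpow_add_mul_rpow_sub_one_mul_sub_le (x := (i : ℝ) + c + 1)
          (y := (i : ℝ) + c + 1 + 1) (by positivity) (by positivity) hq1
        rw [show ((i + 1 : ℕ) : ℝ) + c + 1 = (i : ℝ) + c + 1 + 1 by push_cast; ring]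
        linarith) n
    have : (0 : ℝ) ≤ ((0 : ℕ) + c + 1) ^ q := by positivity
    linarith

theorem sum_range_div_rpow_sq_div_rpow_le {p : ℝ} (hp : 1 ≤ p) (k : ℕ) :
    ∑ i ∈ range (k + 1), ((((i : ℝ) + p) / p) ^ (p - 1)) ^ 2 / ((i : ℝ) + p + 1) ^ ((2 * p - 1) / 2)
      ≤ ((k : ℝ) + p + 2) ^ (p - 1 / 2) / (p - 1 / 2) / p ^ (2 * (p - 1)) := by
  have hp0 : 0 < p := by linarith
  have hsum := sum_range_rpow_sub_one_le (q := p - 1 / 2) (by linarith) hp0.le (k + 1)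
  rw [show ((k + 1 : ℕ) : ℝ) + p + 1 = k + p + 2 by push_cast; ring] at hsum
  calc _ ≤ ∑ i ∈ range (k + 1), ((i : ℝ) + p + 1) ^ (p - 1 / 2 - 1) / p ^ (2 * (p - 1)) := by
        refine sum_le_sum fun i _ => ?_
        rw [show p - 1 / 2 - 1 = 2 * (p - 1) - (2 * p - 1) / 2 by ring]
        exact div_rpow_sq_div_rpow_le (by positivity) hp0 (by linarith) _
    _ ≤ _ := by
        rw [← sum_div]
        gcongr

open Finset in
theorem stmt_8_general (p b σ R L : ℝ) (hp1 : 1 ≤ p)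
    (hb : 0 < b) (hσ : 0 < σ) (hR : 0 < R)
    (a : ℝ) (haa : a = (2 : ℝ) ^ ((2 * p - 1) / 2))
    (α : ℕ → ℝ) (hα : ∀ i, α i = (1 / a) * (((i : ℝ) + p) / p) ^ (p - 1))
    (B : ℕ → ℝ) (hB : ∀ i, B i = a * (α i) ^ 2)
    (β : ℕ → ℝ) (hβ : ∀ i, β i = L + b * σ / R * ((i : ℝ) + p + 1) ^ ((2 * p - 1) / 2))
    (A : ℕ → ℝ) (hA : ∀ k, A k = ∑ i ∈ range (k + 1), α i) :
    ∀ k : ℕ, σ ^ 2 / A k * ∑ i ∈ range (k + 1), B i / (β i - L) ≤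
      σ * R * p ^ (2 - p) / (b * (p - 1 / 2)) *
        (((k : ℝ) + p + 2) ^ (p - 1 / 2) / ((k : ℝ) + p) ^ p) := by
  intro k
  have hp0 : 0 < p := by linarith
  have ha : 0 < a := haa ▸ by positivity
  have hA_ge : 1 / a * (((k : ℝ) + p) / p) ^ p ≤ A k := by
    rw [hA]; simp_rw [hα, ← mul_sum]
    gcongr
    exact div_rpow_le_sum_range_div_rpow_sub_one hp1 k
  have hterm (i : ℕ) : B i / (β i - L) = R / (a * b * σ) *
      (((((i : ℝ) + p) / p) ^ (p - 1)) ^ 2 / ((i : ℝ) + p + 1) ^ ((2 * p - 1) / 2)) := by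
    rw [hB, hα, hβ, add_sub_cancel_left]
    field_simp
  set M := R / (a * b * σ) * (((k : ℝ) + p + 2) ^ (p - 1 / 2) / (p - 1 / 2) / p ^ (2 * (p - 1)))
    with hM
  have hM0 : 0 ≤ M := by
    have : 0 < p - 1 / 2 := by linarith
    positivity
  have hS : ∑ i ∈ range (k + 1), B i / (β i - L) ≤ M := by
    simp_rw [hterm, ← mul_sum, hM]
    gcongr
    exact sum_range_div_rpow_sq_div_rpow_le hp1 k
  have hsplit : p ^ p = p ^ (2 - p) * p ^ (2 * (p - 1)) := by
    rw [← rpow_add hp0]; congr 1; ring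
  have hApos : 0 < A k := lt_of_lt_of_le (by positivity) hA_ge
  calc σ ^ 2 / A k * ∑ i ∈ range (k + 1), B i / (β i - L)
      ≤ σ ^ 2 / A k * M := by gcongr
    _ ≤ σ ^ 2 / (1 / a * (((k : ℝ) + p) / p) ^ p) * M :=
        mul_le_mul_of_nonneg_right (div_le_div_of_nonneg_left (sq_nonneg σ) (by positivity) hA_ge) hM0
    _ = _ := by
      rw [hM, div_rpow (by positivity) hp0.le, hsplit]
      field_simp

open Finset in
/-- With the SIGM coefficients,
`(σ²/A_k)·Σ_{i=0}^k B_i/(β_i - L) ≤ (σR p^(2-p)/(b(p-1/2)))·(k+p+2)^(p-1/2)/(k+p)^p`. -/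
theorem stmt_8 (p b σ R L : ℝ) (hp1 : 1 ≤ p) (hp2 : p ≤ 2)
    (hb : 0 < b) (hσ : 0 < σ) (hR : 0 < R) (hL : 0 ≤ L)
    (a : ℝ) (haa : a = (2 : ℝ) ^ ((2 * p - 1) / 2))
    (α : ℕ → ℝ) (hα : ∀ i, α i = (1 / a) * (((i : ℝ) + p) / p) ^ (p - 1))
    (B : ℕ → ℝ) (hB : ∀ i, B i = a * (α i) ^ 2)
    (β : ℕ → ℝ) (hβ : ∀ i, β i = L + b * σ / R * ((i : ℝ) + p + 1) ^ ((2 * p - 1) / 2))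
    (A : ℕ → ℝ) (hA : ∀ k, A k = ∑ i ∈ range (k + 1), α i) :
    ∀ k : ℕ, σ ^ 2 / A k * ∑ i ∈ range (k + 1), B i / (β i - L) ≤
      σ * R * p ^ (2 - p) / (b * (p - 1 / 2)) *
        (((k : ℝ) + p + 2) ^ (p - 1 / 2) / ((k : ℝ) + p) ^ p) :=
  stmt_8_general p b σ R L hp1 hb hσ hR a haa α hα B hB β hβ A hA
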